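/- arXiv:2011.08620 — 3 statements merged into one kernel-verified Lean document; each statement's English description precedes it below -/
import Mathlib

section
/- If price and weather index are ψ-independent, i.e. ψ_{pw} = ψ_p ψ_w^T, then M_pw = 0, and assuming the n×n matrix K_p obtained by stacking M̂_pp (M_pp with its last row deleted) on top of φ_p^T and the m×m matrix K_w obtained by stacking M̂_ww (M_ww with its last row deleted) on top of φ_w^T are both invertible, for every a > 0 the unique optimal solution of the hedging problem is given blockwise by x_P = K_p^{-1} · (ĉ_p + (1/(2a))(ψ̂_p − φ̂_p), 0) and x_W = K_w^{-1} · (ĉ_w + (1/(2a))(ψ̂_w − φ̂_w), 0), where ĉ_p, ψ̂_p, φ̂_p (resp. ĉ_w, ψ̂_w, φ̂_w) drop the last entry of c_p, ψ_p, φ_p (resp. c_w, ψ_w, φ_w). -/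
/-!
Under independence the covariance of `x_P(p)` and `x_W(w)` vanishes, so `F_a` splits into a
constant plus one concave quadratic in `x_P` and one in `x_W`, each maximized on a hyperplane.
In each block the entries of `M x` and of `c + (ψ - φ) / (2a)` sum to zero, so
`K x = (ĉ + (ψ̂ - φ̂) / (2a), 0)` is the full stationarity system of the Lagrangian with
multiplier `1`. At its solution the objective exceeds its value at any feasible `x` by `a` times
the variance of the deviation; that variance vanishes only when `M` kills the deviation, and then
so does the invertible `K`.
-/

open Finset Matrix

lemma Fin.eq_of_castSucc_eq_of_sum_eq {M : Type*} [AddCancelCommMonoid M] {N : ℕ}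
    {f g : Fin (N + 1) → M}
    (h : ∀ i : Fin N, f i.castSucc = g i.castSucc) (hs : ∑ i, f i = ∑ i, g i) : f = g := by
  funext i
  induction i using Fin.lastCases with
  | cast i => exact h i
  | last =>
    simp only [Fin.sum_univ_castSucc, h] at hs
    exact add_left_cancel hs

section Triple

variable {α β γ R : Type*} [Fintype α] [Fintype β] [Fintype γ] [CommRing R]

lemma sum_sum_sum_comm (F : α → β → γ → R) :
    ∑ i, ∑ k, ∑ j, F i k j = ∑ j, ∑ i, ∑ k, F i k j :=
  (sum_congr rfl fun _ _ => sum_comm).trans sum_comm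

lemma sum_eq_sum_sum_sum_of_fst {u : α → R} {F : α → β → γ → R}
    (h : ∀ i, u i = ∑ k, ∑ j, F i k j) : ∑ i, u i = ∑ i, ∑ k, ∑ j, F i k j := by
  simp only [h]

lemma sum_eq_sum_sum_sum_of_thd {u : γ → R} {F : α → β → γ → R}
    (h : ∀ j, u j = ∑ i, ∑ k, F i k j) : ∑ j, u j = ∑ i, ∑ k, ∑ j, F i k j := by
  simp only [h]
  exact (sum_sum_sum_comm F).symm

lemma sum_sum_sum_mul_fst (F : α → β → γ → R) (g : α → R) :
    ∑ i, ∑ k, ∑ j, F i k j * g i = ∑ i, (∑ k, ∑ j, F i k j) * g i := by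
  simp only [sum_mul]

lemma sum_sum_sum_mul_thd (F : α → β → γ → R) (h : γ → R) :
    ∑ i, ∑ k, ∑ j, F i k j * h j = ∑ j, (∑ i, ∑ k, F i k j) * h j := by
  simp only [sum_mul]
  exact sum_sum_sum_comm _

lemma sum_sum_sum_mul_fst_mul_thd (F : α → β → γ → R) (g : α → R) (h : γ → R) :
    ∑ i, ∑ k, ∑ j, F i k j * (g i * h j) = ∑ i, ∑ j, g i * (∑ k, F i k j) * h j := by
  simp only [sum_mul, mul_sum]
  refine sum_congr rfl fun _ _ => ?_
  rw [sum_comm]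
  exact sum_congr rfl fun _ _ => sum_congr rfl fun _ _ => by ring

lemma sum_sum_sum_mul_sub_sq {ψ : α → β → γ → R} (hψ : ∑ i, ∑ k, ∑ j, ψ i k j = 1)
    (Z : α → β → γ → R) :
    ∑ i, ∑ k, ∑ j, ψ i k j * (Z i k j - ∑ i', ∑ k', ∑ j', ψ i' k' j' * Z i' k' j') ^ 2
      = ∑ i, ∑ k, ∑ j, ψ i k j * Z i k j ^ 2 - (∑ i, ∑ k, ∑ j, ψ i k j * Z i k j) ^ 2 := by
  set e := ∑ i, ∑ k, ∑ j, ψ i k j * Z i k j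
  have hexp : ∀ i k j, ψ i k j * (Z i k j - e) ^ 2
      = ψ i k j * Z i k j ^ 2 - 2 * e * (ψ i k j * Z i k j) + e ^ 2 * ψ i k j := by
    intros; ring
  simp only [hexp, sum_add_distrib, sum_sub_distrib, ← mul_sum, hψ]
  ring

end Triple

namespace Hedging

section Block

variable {ι : Type*} [DecidableEq ι]

/-- The paper's `M_pp`, `M_ww`: for a probability vector `μ`, `x ⬝ᵥ covMatrix μ *ᵥ y` is the
`μ`-covariance of `x` and `y`. -/
def covMatrix (μ : ι → ℝ) : Matrix ι ι ℝ := diagonal μ - vecMulVec μ μ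

lemma covMatrix_apply (μ : ι → ℝ) (i j : ι) :
    covMatrix μ i j = (if i = j then μ i else 0) - μ i * μ j := by
  simp [covMatrix, diagonal_apply, vecMulVec_apply]

lemma covMatrix_transpose (μ : ι → ℝ) : (covMatrix μ)ᵀ = covMatrix μ := by
  simp [covMatrix, transpose_sub, diagonal_transpose, transpose_vecMulVec]

lemma covMatrix_isHermitian (μ : ι → ℝ) : (covMatrix μ).IsHermitian := by
  rw [IsHermitian, conjTranspose_eq_transpose_of_trivial, covMatrix_transpose]

variable [Fintype ι]

lemma covMatrix_mulVec (μ x : ι → ℝ) (i : ι) :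
    (covMatrix μ *ᵥ x) i = μ i * x i - μ i * (μ ⬝ᵥ x) := by
  simp [covMatrix, sub_mulVec, mulVec_diagonal, vecMulVec_mulVec, mul_comm]

lemma sum_covMatrix_mulVec {μ : ι → ℝ} (hμ : ∑ i, μ i = 1) (x : ι → ℝ) :
    ∑ i, (covMatrix μ *ᵥ x) i = 0 := by
  simp only [covMatrix_mulVec, sum_sub_distrib, ← sum_mul, hμ, one_mul, dotProduct, sub_self]

lemma dotProduct_covMatrix_mulVec_eq_sub (μ x : ι → ℝ) :
    x ⬝ᵥ covMatrix μ *ᵥ x = ∑ i, μ i * x i ^ 2 - (μ ⬝ᵥ x) ^ 2 := by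
  simp only [dotProduct, covMatrix_mulVec, mul_sub, sum_sub_distrib]
  rw [sq, sum_mul]
  exact congrArg₂ _ (sum_congr rfl fun _ _ => by ring) (sum_congr rfl fun _ _ => by ring)

lemma dotProduct_covMatrix_mulVec {μ : ι → ℝ} (hμ : ∑ i, μ i = 1) (x : ι → ℝ) :
    x ⬝ᵥ covMatrix μ *ᵥ x = ∑ i, μ i * (x i - μ ⬝ᵥ x) ^ 2 := by
  have hsq : ∀ i, μ i * (x i - μ ⬝ᵥ x) ^ 2
      = x i * (covMatrix μ *ᵥ x) i - (μ ⬝ᵥ x) * (covMatrix μ *ᵥ x) i := by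
    intro i; rw [covMatrix_mulVec]; ring
  rw [sum_congr rfl fun i _ => hsq i, sum_sub_distrib, ← mul_sum, sum_covMatrix_mulVec hμ,
    mul_zero, sub_zero, dotProduct]

lemma covMatrix_posSemidef {μ : ι → ℝ} (hμ0 : ∀ i, 0 ≤ μ i) (hμ : ∑ i, μ i = 1) :
    (covMatrix μ).PosSemidef :=
  .of_dotProduct_mulVec_nonneg (covMatrix_isHermitian μ) fun x => by
    rw [star_trivial, dotProduct_covMatrix_mulVec hμ]
    exact sum_nonneg fun i _ => mul_nonneg (hμ0 i) (sq_nonneg _)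

/-- The part of `E[Y] - a Var[Y]` that depends on one hedge `x`; with `c = μy μ - v` one has
`c ⬝ᵥ x = -Cov(y, x)`. -/
def blockObjective (a : ℝ) (μ c x : ι → ℝ) : ℝ :=
  μ ⬝ᵥ x + 2 * a * (c ⬝ᵥ x) - a * (x ⬝ᵥ covMatrix μ *ᵥ x)

/-- `hstat` says that `x₀` is a critical point of the Lagrangian `blockObjective a μ c - φ ⬝ᵥ ·`. -/
lemma blockObjective_eq_sub {a : ℝ} (ha : a ≠ 0) {μ c φ x₀ : ι → ℝ}
    (hstat : covMatrix μ *ᵥ x₀ = c + (1 / (2 * a)) • (μ - φ)) {x : ι → ℝ}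
    (hx : φ ⬝ᵥ x = φ ⬝ᵥ x₀) :
    blockObjective a μ c x
      = blockObjective a μ c x₀ - a * ((x - x₀) ⬝ᵥ covMatrix μ *ᵥ (x - x₀)) := by
  obtain ⟨d, rfl⟩ : ∃ d, x = x₀ + d := ⟨x - x₀, by abel⟩
  have hφd : φ ⬝ᵥ d = 0 := by simpa [dotProduct_add] using hx
  have hsymm : x₀ ⬝ᵥ covMatrix μ *ᵥ d = d ⬝ᵥ covMatrix μ *ᵥ x₀ := by
    rw [dotProduct_mulVec, ← mulVec_transpose, covMatrix_transpose, dotProduct_comm]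
  have hcross : d ⬝ᵥ covMatrix μ *ᵥ x₀ = c ⬝ᵥ d + (1 / (2 * a)) * (μ ⬝ᵥ d) := by
    rw [hstat, dotProduct_add, dotProduct_smul, dotProduct_sub, dotProduct_comm d φ, hφd,
      dotProduct_comm d c, dotProduct_comm d μ, smul_eq_mul, sub_zero]
  simp only [blockObjective, add_sub_cancel_left, mulVec_add, dotProduct_add, add_dotProduct,
    hsymm, hcross]
  field_simp
  ring

end Block

section Stacked

variable {N : ℕ} {μ c φ : Fin (N + 1) → ℝ} {K : Matrix (Fin N ⊕ Fin 1) (Fin (N + 1)) ℝ}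

lemma mulVec_eq_sum_elim (hKM : ∀ (i : Fin N) t, K (Sum.inl i) t = covMatrix μ i.castSucc t)
    (hKφ : ∀ (u : Fin 1) t, K (Sum.inr u) t = φ t) (x : Fin (N + 1) → ℝ) :
    K *ᵥ x = Sum.elim (fun i => (covMatrix μ *ᵥ x) i.castSucc) (fun _ => φ ⬝ᵥ x) := by
  ext (i | u)
  · simp only [mulVec, dotProduct, hKM, Sum.elim_inl]
  · simp only [mulVec, dotProduct, hKφ, Sum.elim_inr]

/-- Both sides of `covMatrix μ *ᵥ x = c + (1 / (2 * a)) • (μ - φ)` have entries summing to `0`,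
so the row of it that `K` omits follows from the others. -/
lemma covMatrix_mulVec_eq_of_mulVec_eq {a : ℝ} (hμ : ∑ i, μ i = 1) (hφ : ∑ i, φ i = 1)
    (hc : ∑ i, c i = 0) (hKM : ∀ (i : Fin N) t, K (Sum.inl i) t = covMatrix μ i.castSucc t)
    (hKφ : ∀ (u : Fin 1) t, K (Sum.inr u) t = φ t) {x : Fin (N + 1) → ℝ}
    (hx : K *ᵥ x = Sum.elim
      (fun i : Fin N => c i.castSucc + (1 / (2 * a)) * (μ i.castSucc - φ i.castSucc))
      (fun _ => 0)) :
    φ ⬝ᵥ x = 0 ∧ covMatrix μ *ᵥ x = c + (1 / (2 * a)) • (μ - φ) := by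
  rw [mulVec_eq_sum_elim hKM hKφ] at hx
  refine ⟨by simpa using congrFun hx (Sum.inr 0), ?_⟩
  refine Fin.eq_of_castSucc_eq_of_sum_eq (fun i => by simpa using congrFun hx (Sum.inl i)) ?_
  simp only [sum_covMatrix_mulVec hμ, Pi.add_apply, Pi.smul_apply, Pi.sub_apply, smul_eq_mul,
    sum_add_distrib, ← mul_sum, sum_sub_distrib, hμ, hφ, hc]
  ring

lemma eq_of_covMatrix_mulVec_sub_eq_zero {K' : Matrix (Fin (N + 1)) (Fin N ⊕ Fin 1) ℝ}
    (hK'K : K' * K = 1) (hKM : ∀ (i : Fin N) t, K (Sum.inl i) t = covMatrix μ i.castSucc t)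
    (hKφ : ∀ (u : Fin 1) t, K (Sum.inr u) t = φ t) {x x₀ : Fin (N + 1) → ℝ}
    (hM : covMatrix μ *ᵥ (x - x₀) = 0) (hφ : φ ⬝ᵥ (x - x₀) = 0) : x = x₀ := by
  have hK : K *ᵥ (x - x₀) = 0 := by
    rw [mulVec_eq_sum_elim hKM hKφ, hM, hφ]
    ext (i | u) <;> rfl
  rw [← sub_eq_zero, ← one_mulVec (x - x₀), ← hK'K, ← mulVec_mulVec, hK, mulVec_zero]

theorem blockObjective_optimal {a : ℝ} (ha : 0 < a) (hμ0 : ∀ i, 0 ≤ μ i)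
    (hμ : ∑ i, μ i = 1) (hφ : ∑ i, φ i = 1) (hc : ∑ i, c i = 0)
    (hKM : ∀ (i : Fin N) t, K (Sum.inl i) t = covMatrix μ i.castSucc t)
    (hKφ : ∀ (u : Fin 1) t, K (Sum.inr u) t = φ t) {K' : Matrix (Fin (N + 1)) (Fin N ⊕ Fin 1) ℝ}
    (hKK' : K * K' = 1) (hK'K : K' * K = 1) {x₀ : Fin (N + 1) → ℝ}
    (hx₀ : x₀ = K' *ᵥ Sum.elim
      (fun i : Fin N => c i.castSucc + (1 / (2 * a)) * (μ i.castSucc - φ i.castSucc))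
      (fun _ => 0)) :
    φ ⬝ᵥ x₀ = 0 ∧ ∀ x, φ ⬝ᵥ x = 0 →
      blockObjective a μ c x ≤ blockObjective a μ c x₀ ∧
      (blockObjective a μ c x₀ ≤ blockObjective a μ c x → x = x₀) := by
  obtain ⟨hφx₀, hstat⟩ := covMatrix_mulVec_eq_of_mulVec_eq (a := a) (x := x₀) hμ hφ hc hKM hKφ
    (by rw [hx₀, mulVec_mulVec, hKK', one_mulVec])
  refine ⟨hφx₀, fun x hx => ?_⟩
  have hdiff := blockObjective_eq_sub ha.ne' hstat (hx.trans hφx₀.symm)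
  have hpsd := covMatrix_posSemidef hμ0 hμ
  have hvar : 0 ≤ (x - x₀) ⬝ᵥ covMatrix μ *ᵥ (x - x₀) := by
    simpa using hpsd.dotProduct_mulVec_nonneg (x - x₀)
  refine ⟨by rw [hdiff]; exact sub_le_self _ (mul_nonneg ha.le hvar), fun hle => ?_⟩
  have hvar0 : (x - x₀) ⬝ᵥ covMatrix μ *ᵥ (x - x₀) = 0 := by
    rw [hdiff] at hle
    nlinarith
  refine eq_of_covMatrix_mulVec_sub_eq_zero hK'K hKM hKφ ?_ ?_
  · exact (hpsd.dotProduct_mulVec_zero_iff _).mp (by simpa using hvar0)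
  · rw [dotProduct_sub, hx, hφx₀, sub_zero]

end Stacked


theorem hedgedObjective_eq {α β γ : Type*} [Fintype α] [Fintype β] [Fintype γ]
    [DecidableEq α] [DecidableEq γ] (ψ : α → β → γ → ℝ) (hψ1 : ∑ i, ∑ k, ∑ j, ψ i k j = 1)
    (ψp : α → ℝ) (hψp : ∀ i, ψp i = ∑ k, ∑ j, ψ i k j)
    (ψw : γ → ℝ) (hψw : ∀ j, ψw j = ∑ i, ∑ k, ψ i k j)
    (hind : ∀ i j, ∑ k, ψ i k j = ψp i * ψw j)
    (y : α → β → ℝ) (μy : ℝ) (hμy : μy = ∑ i, ∑ k, ∑ j, ψ i k j * y i k)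
    (σy2 : ℝ) (hσy2 : σy2 = ∑ i, ∑ k, ∑ j, ψ i k j * (y i k - μy) ^ 2)
    (vp : α → ℝ) (hvp : ∀ i, vp i = ∑ k, ∑ j, ψ i k j * y i k)
    (vw : γ → ℝ) (hvw : ∀ j, vw j = ∑ i, ∑ k, ψ i k j * y i k)
    (cp : α → ℝ) (hcp : ∀ i, cp i = μy * ψp i - vp i)
    (cw : γ → ℝ) (hcw : ∀ j, cw j = μy * ψw j - vw j)
    (a : ℝ) (xP : α → ℝ) (xW : γ → ℝ) :
    (∑ i, ∑ k, ∑ j, ψ i k j * (y i k + xP i + xW j)) -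
      a * (∑ i, ∑ k, ∑ j, ψ i k j *
        (y i k + xP i + xW j - ∑ i', ∑ k', ∑ j', ψ i' k' j' * (y i' k' + xP i' + xW j')) ^ 2)
      = μy - a * σy2 + blockObjective a ψp cp xP + blockObjective a ψw cw xW := by
  have hmean : ∑ i, ∑ k, ∑ j, ψ i k j * (y i k + xP i + xW j)
      = μy + ψp ⬝ᵥ xP + ψw ⬝ᵥ xW := by
    simp only [mul_add, sum_add_distrib, sum_sum_sum_mul_fst, sum_sum_sum_mul_thd, ← hψp, ← hψw,
      hμy, dotProduct]
  have hsecond : ∑ i, ∑ k, ∑ j, ψ i k j * (y i k + xP i + xW j) ^ 2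
      = ∑ i, ∑ k, ∑ j, ψ i k j * y i k ^ 2 + ∑ i, ψp i * xP i ^ 2 + ∑ j, ψw j * xW j ^ 2
        + 2 * (vp ⬝ᵥ xP) + 2 * (vw ⬝ᵥ xW) + 2 * ((ψp ⬝ᵥ xP) * (ψw ⬝ᵥ xW)) := by
    have hexp : ∀ i k j, ψ i k j * (y i k + xP i + xW j) ^ 2
        = ψ i k j * y i k ^ 2 + ψ i k j * xP i ^ 2 + ψ i k j * xW j ^ 2
          + 2 * (ψ i k j * y i k * xP i) + 2 * (ψ i k j * y i k * xW j)
          + 2 * (ψ i k j * (xP i * xW j)) := by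
      intros; ring
    have hcross : ∑ i, ∑ k, ∑ j, ψ i k j * (xP i * xW j) = (ψp ⬝ᵥ xP) * (ψw ⬝ᵥ xW) := by
      simp only [sum_sum_sum_mul_fst_mul_thd, hind, dotProduct, sum_mul, mul_sum]
      rw [sum_comm]
      exact sum_congr rfl fun _ _ => sum_congr rfl fun _ _ => by ring
    simp only [hexp, sum_add_distrib, ← mul_sum, hcross]
    rw [sum_sum_sum_mul_fst, sum_sum_sum_mul_thd, sum_sum_sum_mul_fst, sum_sum_sum_mul_thd]
    simp only [← hψp, ← hψw, ← hvp, ← hvw, dotProduct]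
  have hσ : σy2 = ∑ i, ∑ k, ∑ j, ψ i k j * y i k ^ 2 - μy ^ 2 := by
    rw [hσy2, hμy, sum_sum_sum_mul_sub_sq hψ1 (fun i k _ => y i k)]
  have hcpx : cp ⬝ᵥ xP = μy * (ψp ⬝ᵥ xP) - vp ⬝ᵥ xP := by
    simp only [dotProduct, hcp, sub_mul, sum_sub_distrib, mul_assoc, ← mul_sum]
  have hcwx : cw ⬝ᵥ xW = μy * (ψw ⬝ᵥ xW) - vw ⬝ᵥ xW := by
    simp only [dotProduct, hcw, sub_mul, sum_sub_distrib, mul_assoc, ← mul_sum]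
  rw [sum_sum_sum_mul_sub_sq hψ1, hsecond, hmean, blockObjective, blockObjective,
    dotProduct_covMatrix_mulVec_eq_sub, dotProduct_covMatrix_mulVec_eq_sub, hcpx, hcwx, hσ]
  ring

end Hedging

open Hedging

theorem stmt_16_general (n m l : ℕ)
    (ψ : Fin (n+1) → Fin l → Fin (m+1) → ℝ)
    (hψ0 : ∀ i k j, 0 ≤ ψ i k j)
    (hψ1 : ∑ i, ∑ k, ∑ j, ψ i k j = 1)
    (ψp : Fin (n+1) → ℝ) (hψp : ∀ i, ψp i = ∑ k, ∑ j, ψ i k j)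
    (ψw : Fin (m+1) → ℝ) (hψw : ∀ j, ψw j = ∑ i, ∑ k, ψ i k j)
    (ψpw : Matrix (Fin (n+1)) (Fin (m+1)) ℝ) (hψpw : ∀ i j, ψpw i j = ∑ k, ψ i k j)
    (y : Fin (n+1) → Fin l → ℝ)
    (μy : ℝ) (hμy : μy = ∑ i, ∑ k, ∑ j, ψ i k j * y i k)
    (σy2 : ℝ) (hσy2 : σy2 = ∑ i, ∑ k, ∑ j, ψ i k j * (y i k - μy)^2)
    (vp : Fin (n+1) → ℝ) (hvp : ∀ i, vp i = ∑ k, ∑ j, ψ i k j * y i k)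
    (vw : Fin (m+1) → ℝ) (hvw : ∀ j, vw j = ∑ i, ∑ k, ψ i k j * y i k)
    (cp : Fin (n+1) → ℝ) (hcp : ∀ i, cp i = μy * ψp i - vp i)
    (cw : Fin (m+1) → ℝ) (hcw : ∀ j, cw j = μy * ψw j - vw j)
    (Mpp : Matrix (Fin (n+1)) (Fin (n+1)) ℝ)
    (hMpp : ∀ i i', Mpp i i' = (if i = i' then ψp i else 0) - ψp i * ψp i')
    (Mww : Matrix (Fin (m+1)) (Fin (m+1)) ℝ)
    (hMww : ∀ j j', Mww j j' = (if j = j' then ψw j else 0) - ψw j * ψw j')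
    (Mpw : Matrix (Fin (n+1)) (Fin (m+1)) ℝ)
    (hMpw : ∀ i j, Mpw i j = ψpw i j - ψp i * ψw j)
    (φ : Fin (n+1) → Fin (m+1) → ℝ)
    (hφ1 : ∑ i, ∑ j, φ i j = 1)
    (φp : Fin (n+1) → ℝ) (hφp : ∀ i, φp i = ∑ j, φ i j)
    (φw : Fin (m+1) → ℝ) (hφw : ∀ j, φw j = ∑ i, φ i j)
    (Kp : Matrix (Fin n ⊕ Fin 1) (Fin (n+1)) ℝ)
    (hKpM : ∀ (i : Fin n) t, Kp (Sum.inl i) t = Mpp i.castSucc t)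
    (hKpφ : ∀ (u : Fin 1) t, Kp (Sum.inr u) t = φp t)
    (Kp' : Matrix (Fin (n+1)) (Fin n ⊕ Fin 1) ℝ)
    (hKpKp' : Kp * Kp' = 1) (hKp'Kp : Kp' * Kp = 1)
    (Kw : Matrix (Fin m ⊕ Fin 1) (Fin (m+1)) ℝ)
    (hKwM : ∀ (j : Fin m) t, Kw (Sum.inl j) t = Mww j.castSucc t)
    (hKwφ : ∀ (u : Fin 1) t, Kw (Sum.inr u) t = φw t)
    (Kw' : Matrix (Fin (m+1)) (Fin m ⊕ Fin 1) ℝ)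
    (hKwKw' : Kw * Kw' = 1) (hKw'Kw : Kw' * Kw = 1)
    (F : ℝ → (Fin (n+1) → ℝ) → (Fin (m+1) → ℝ) → ℝ)
    (hF : ∀ (a : ℝ) (xP : Fin (n+1) → ℝ) (xW : Fin (m+1) → ℝ), F a xP xW =
      (∑ i, ∑ k, ∑ j, ψ i k j * (y i k + xP i + xW j)) -
      a * (∑ i, ∑ k, ∑ j, ψ i k j *
        (y i k + xP i + xW j - ∑ i', ∑ k', ∑ j', ψ i' k' j' * (y i' k' + xP i' + xW j'))^2))
    (hind : ∀ i j, ψpw i j = ψp i * ψw j) :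
    (∀ i j, Mpw i j = 0) ∧
    (∀ a : ℝ, 0 < a →
      ∀ (cxP : Fin (n+1) → ℝ) (cxW : Fin (m+1) → ℝ),
      cxP = Kp'.mulVec (Sum.elim
        (fun i : Fin n => cp i.castSucc + (1/(2*a)) * (ψp i.castSucc - φp i.castSucc))
        (fun _ => 0)) →
      cxW = Kw'.mulVec (Sum.elim
        (fun j : Fin m => cw j.castSucc + (1/(2*a)) * (ψw j.castSucc - φw j.castSucc))
        (fun _ => 0)) →
      (((∑ i, φp i * cxP i) = 0 ∧ (∑ j, φw j * cxW j) = 0 ∧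
        ∀ (xP : Fin (n+1) → ℝ) (xW : Fin (m+1) → ℝ),
          (∑ i, φp i * xP i) = 0 → (∑ j, φw j * xW j) = 0 → F a xP xW ≤ F a cxP cxW) ∧
       ∀ (xP : Fin (n+1) → ℝ) (xW : Fin (m+1) → ℝ),
         (∑ i, φp i * xP i) = 0 → (∑ j, φw j * xW j) = 0 →
         (∀ (xP' : Fin (n+1) → ℝ) (xW' : Fin (m+1) → ℝ),
           (∑ i, φp i * xP' i) = 0 → (∑ j, φw j * xW' j) = 0 → F a xP' xW' ≤ F a xP xW) →
         xP = cxP ∧ xW = cxW)) := by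
  have hψind : ∀ i j, ∑ k, ψ i k j = ψp i * ψw j := fun i j => (hψpw i j).symm.trans (hind i j)
  obtain rfl : Mpp = covMatrix ψp := by ext; rw [hMpp, covMatrix_apply]
  obtain rfl : Mww = covMatrix ψw := by ext; rw [hMww, covMatrix_apply]
  have hSψp : ∑ i, ψp i = 1 := (sum_eq_sum_sum_sum_of_fst hψp).trans hψ1
  have hSψw : ∑ j, ψw j = 1 := (sum_eq_sum_sum_sum_of_thd hψw).trans hψ1
  have hSφp : ∑ i, φp i = 1 := by simp only [hφp]; exact hφ1
  have hSφw : ∑ j, φw j = 1 := by simp only [hφw]; rw [sum_comm]; exact hφ1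
  have hScp : ∑ i, cp i = 0 := by
    rw [sum_congr rfl fun i _ => hcp i, sum_sub_distrib, ← mul_sum, hSψp,
      sum_eq_sum_sum_sum_of_fst hvp, ← hμy, mul_one, sub_self]
  have hScw : ∑ j, cw j = 0 := by
    rw [sum_congr rfl fun j _ => hcw j, sum_sub_distrib, ← mul_sum, hSψw,
      sum_eq_sum_sum_sum_of_thd hvw, ← hμy, mul_one, sub_self]
  have hψp0 : ∀ i, 0 ≤ ψp i := fun i =>
    hψp i ▸ sum_nonneg fun k _ => sum_nonneg fun j _ => hψ0 i k j
  have hψw0 : ∀ j, 0 ≤ ψw j := fun j =>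
    hψw j ▸ sum_nonneg fun i _ => sum_nonneg fun k _ => hψ0 i k j
  refine ⟨fun i j => by rw [hMpw, hind, sub_self], fun a ha cxP cxW hcxP hcxW => ?_⟩
  obtain ⟨hφP, hoptP⟩ := blockObjective_optimal ha hψp0 hSψp hSφp hScp hKpM hKpφ hKpKp' hKp'Kp hcxP
  obtain ⟨hφW, hoptW⟩ := blockObjective_optimal ha hψw0 hSψw hSφw hScw hKwM hKwφ hKwKw' hKw'Kw hcxW
  have hFdec : ∀ xP xW, F a xP xW
      = μy - a * σy2 + blockObjective a ψp cp xP + blockObjective a ψw cw xW := fun xP xW =>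
    (hF a xP xW).trans (hedgedObjective_eq ψ hψ1 ψp hψp ψw hψw hψind y μy hμy σy2 hσy2
      vp hvp vw hvw cp hcp cw hcw a xP xW)
  refine ⟨⟨hφP, hφW, fun xP xW hxP hxW => ?_⟩, fun xP xW hxP hxW hmax => ?_⟩
  · rw [hFdec, hFdec]
    linarith [(hoptP xP hxP).1, (hoptW xW hxW).1]
  · have hle := hmax cxP cxW hφP hφW
    rw [hFdec, hFdec] at hle
    exact ⟨(hoptP xP hxP).2 (by linarith [(hoptW xW hxW).1]),
      (hoptW xW hxW).2 (by linarith [(hoptP xP hxP).1])⟩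

theorem stmt_16 (n m l : ℕ) (hl : 1 ≤ l)
    (p : Fin (n+1) → ℝ) (q : Fin l → ℝ) (w : Fin (m+1) → ℝ)
    (ψ : Fin (n+1) → Fin l → Fin (m+1) → ℝ)
    (hψ0 : ∀ i k j, 0 ≤ ψ i k j)
    (hψ1 : ∑ i, ∑ k, ∑ j, ψ i k j = 1)
    (ψp : Fin (n+1) → ℝ) (hψp : ∀ i, ψp i = ∑ k, ∑ j, ψ i k j)
    (ψw : Fin (m+1) → ℝ) (hψw : ∀ j, ψw j = ∑ i, ∑ k, ψ i k j)
    (ψpw : Matrix (Fin (n+1)) (Fin (m+1)) ℝ) (hψpw : ∀ i j, ψpw i j = ∑ k, ψ i k j)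
    (r : ℝ) (y : Fin (n+1) → Fin l → ℝ) (hy : ∀ i k, y i k = (r - p i) * q k)
    (μy : ℝ) (hμy : μy = ∑ i, ∑ k, ∑ j, ψ i k j * y i k)
    (σy2 : ℝ) (hσy2 : σy2 = ∑ i, ∑ k, ∑ j, ψ i k j * (y i k - μy)^2)
    (vp : Fin (n+1) → ℝ) (hvp : ∀ i, vp i = ∑ k, ∑ j, ψ i k j * y i k)
    (vw : Fin (m+1) → ℝ) (hvw : ∀ j, vw j = ∑ i, ∑ k, ψ i k j * y i k)
    (cp : Fin (n+1) → ℝ) (hcp : ∀ i, cp i = μy * ψp i - vp i)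
    (cw : Fin (m+1) → ℝ) (hcw : ∀ j, cw j = μy * ψw j - vw j)
    (Mpp : Matrix (Fin (n+1)) (Fin (n+1)) ℝ)
    (hMpp : ∀ i i', Mpp i i' = (if i = i' then ψp i else 0) - ψp i * ψp i')
    (Mww : Matrix (Fin (m+1)) (Fin (m+1)) ℝ)
    (hMww : ∀ j j', Mww j j' = (if j = j' then ψw j else 0) - ψw j * ψw j')
    (Mpw : Matrix (Fin (n+1)) (Fin (m+1)) ℝ)
    (hMpw : ∀ i j, Mpw i j = ψpw i j - ψp i * ψw j)
    (φ : Fin (n+1) → Fin (m+1) → ℝ)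
    (hφ0 : ∀ i j, 0 ≤ φ i j) (hφ1 : ∑ i, ∑ j, φ i j = 1)
    (φp : Fin (n+1) → ℝ) (hφp : ∀ i, φp i = ∑ j, φ i j)
    (φw : Fin (m+1) → ℝ) (hφw : ∀ j, φw j = ∑ i, φ i j)
    (Kp : Matrix (Fin n ⊕ Fin 1) (Fin (n+1)) ℝ)
    (hKpM : ∀ (i : Fin n) t, Kp (Sum.inl i) t = Mpp i.castSucc t)
    (hKpφ : ∀ (u : Fin 1) t, Kp (Sum.inr u) t = φp t)
    (Kp' : Matrix (Fin (n+1)) (Fin n ⊕ Fin 1) ℝ)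
    (hKpKp' : Kp * Kp' = 1) (hKp'Kp : Kp' * Kp = 1)
    (Kw : Matrix (Fin m ⊕ Fin 1) (Fin (m+1)) ℝ)
    (hKwM : ∀ (j : Fin m) t, Kw (Sum.inl j) t = Mww j.castSucc t)
    (hKwφ : ∀ (u : Fin 1) t, Kw (Sum.inr u) t = φw t)
    (Kw' : Matrix (Fin (m+1)) (Fin m ⊕ Fin 1) ℝ)
    (hKwKw' : Kw * Kw' = 1) (hKw'Kw : Kw' * Kw = 1)
    (F : ℝ → (Fin (n+1) → ℝ) → (Fin (m+1) → ℝ) → ℝ)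
    (hF : ∀ (a : ℝ) (xP : Fin (n+1) → ℝ) (xW : Fin (m+1) → ℝ), F a xP xW =
      (∑ i, ∑ k, ∑ j, ψ i k j * (y i k + xP i + xW j)) -
      a * (∑ i, ∑ k, ∑ j, ψ i k j *
        (y i k + xP i + xW j - ∑ i', ∑ k', ∑ j', ψ i' k' j' * (y i' k' + xP i' + xW j'))^2))
    (hind : ∀ i j, ψpw i j = ψp i * ψw j) :
    (∀ i j, Mpw i j = 0) ∧
    (∀ a : ℝ, 0 < a →
      ∀ (cxP : Fin (n+1) → ℝ) (cxW : Fin (m+1) → ℝ),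
      cxP = Kp'.mulVec (Sum.elim
        (fun i : Fin n => cp i.castSucc + (1/(2*a)) * (ψp i.castSucc - φp i.castSucc))
        (fun _ => 0)) →
      cxW = Kw'.mulVec (Sum.elim
        (fun j : Fin m => cw j.castSucc + (1/(2*a)) * (ψw j.castSucc - φw j.castSucc))
        (fun _ => 0)) →
      (((∑ i, φp i * cxP i) = 0 ∧ (∑ j, φw j * cxW j) = 0 ∧
        ∀ (xP : Fin (n+1) → ℝ) (xW : Fin (m+1) → ℝ),
          (∑ i, φp i * xP i) = 0 → (∑ j, φw j * xW j) = 0 → F a xP xW ≤ F a cxP cxW) ∧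
       ∀ (xP : Fin (n+1) → ℝ) (xW : Fin (m+1) → ℝ),
         (∑ i, φp i * xP i) = 0 → (∑ j, φw j * xW j) = 0 →
         (∀ (xP' : Fin (n+1) → ℝ) (xW' : Fin (m+1) → ℝ),
           (∑ i, φp i * xP' i) = 0 → (∑ j, φw j * xW' j) = 0 → F a xP' xW' ≤ F a xP xW) →
         xP = cxP ∧ xW = cxW)) :=
  stmt_16_general n m l ψ hψ0 hψ1 ψp hψp ψw hψw ψpw hψpw y μy hμy σy2 hσy2 vp hvp vw hvw cp hcp cw
    hcw Mpp hMpp Mww hMww Mpw hMpw φ hφ1 φp hφp φw hφw Kp hKpM hKpφ Kp' hKpKp' hKp'Kp Kw hKwM hKwφ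
    Kw' hKwKw' hKw'Kw F hF hind
end

section
/- Separation under independence: if ψ_{pw} = ψ_p ψ_w^T, then for any a > 0 a pair (x_P, x_W) is an optimal solution of the joint hedging problem if and only if x_P maximizes G_p(x) = (ψ_p + 2a c_p)^T x − a x^T M_pp x over {x ∈ ℝ^n : φ_p^T x = 0} and x_W maximizes G_w(x) = (ψ_w + 2a c_w)^T x − a x^T M_ww x over {x ∈ ℝ^m : φ_w^T x = 0}. -/
/-!
Independence of price and weather gives `E[x_P(p) x_W(w)] = E[x_P(p)] E[x_W(w)]`, so the two
hedges are uncorrelated. Expanding mean and variance of `y + x_P + x_W` then splits the objective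
as `F_a(x_P, x_W) = (μ_y - a Var y) + G_p(x_P) + G_w(x_W)`: the covariances of `y` with the hedges
produce `c_p` and `c_w`, and `Var x_P = x_Pᵀ M_pp x_P`. Since the constraints decouple too, a pair
maximizes the sum exactly when each component maximizes its own summand.
-/

open Finset Matrix

theorem sum_mul_sub_sum_mul_sq {Ω : Type*} [Fintype Ω] {π : Ω → ℝ} (hπ : ∑ ω, π ω = 1)
    (X : Ω → ℝ) :
    ∑ ω, π ω * (X ω - ∑ ω', π ω' * X ω') ^ 2 = ∑ ω, π ω * X ω ^ 2 - (∑ ω, π ω * X ω) ^ 2 := by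
  set μ := ∑ ω, π ω * X ω
  have expand : ∀ ω, π ω * (X ω - μ) ^ 2 = π ω * X ω ^ 2 - 2 * μ * (π ω * X ω) + μ ^ 2 * π ω :=
    fun ω => by ring
  simp only [expand, sum_add_distrib, sum_sub_distrib, ← mul_sum, hπ]
  ring

theorem sum_add_mul_sub_mul {ι : Type*} [Fintype ι] (π v u : ι → ℝ) (b μ : ℝ) :
    ∑ i, (π i + b * (μ * π i - v i)) * u i =
      (1 + b * μ) * ∑ i, π i * u i - b * ∑ i, v i * u i := by
  simp only [mul_sum, ← sum_sub_distrib]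
  exact sum_congr rfl fun i _ => by ring

theorem dotProduct_diagonal_sub_vecMulVec_mulVec {ι : Type*} [Fintype ι] [DecidableEq ι]
    (π u : ι → ℝ) :
    u ⬝ᵥ (diagonal π - vecMulVec π π) *ᵥ u = ∑ i, π i * u i ^ 2 - (∑ i, π i * u i) ^ 2 := by
  rw [sub_mulVec, dotProduct_sub, vecMulVec_mulVec]
  simp only [dotProduct, mulVec_diagonal, op_smul_eq_smul, Pi.smul_apply, smul_eq_mul]
  rw [sq, mul_sum]
  congr 1 <;> exact sum_congr rfl fun i _ => by ring

section TripleSums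

variable {ι κ τ : Type*} [Fintype ι] [Fintype κ] [Fintype τ] {ψ : ι → κ → τ → ℝ}

theorem sum3_mul_fst {ψp : ι → ℝ} (hψp : ∀ i, ψp i = ∑ k, ∑ j, ψ i k j) (u : ι → ℝ) :
    ∑ i, ∑ k, ∑ j, ψ i k j * u i = ∑ i, ψp i * u i := by
  simp only [hψp, sum_mul]

theorem sum3_mul_thd {ψw : τ → ℝ} (hψw : ∀ j, ψw j = ∑ i, ∑ k, ψ i k j) (v : τ → ℝ) :
    ∑ i, ∑ k, ∑ j, ψ i k j * v j = ∑ j, ψw j * v j := by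
  calc ∑ i, ∑ k, ∑ j, ψ i k j * v j = ∑ i, ∑ j, ∑ k, ψ i k j * v j :=
        sum_congr rfl fun i _ => sum_comm
    _ = ∑ j, ∑ i, ∑ k, ψ i k j * v j := sum_comm
    _ = ∑ j, ψw j * v j := by simp only [hψw, sum_mul]

theorem sum3_mul_fst_mul_thd {ψp : ι → ℝ} {ψw : τ → ℝ}
    (hind : ∀ i j, ∑ k, ψ i k j = ψp i * ψw j) (u : ι → ℝ) (v : τ → ℝ) :
    ∑ i, ∑ k, ∑ j, ψ i k j * (u i * v j) = (∑ i, ψp i * u i) * ∑ j, ψw j * v j := by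
  simp only [sum_mul_sum]
  refine sum_congr rfl fun i _ => ?_
  rw [sum_comm]
  refine sum_congr rfl fun j _ => ?_
  rw [← sum_mul, hind]
  ring

theorem sum3_mul_add_add {ψp : ι → ℝ} {ψw : τ → ℝ} (hψp : ∀ i, ψp i = ∑ k, ∑ j, ψ i k j)
    (hψw : ∀ j, ψw j = ∑ i, ∑ k, ψ i k j) (y : ι → κ → ℝ) (u : ι → ℝ) (v : τ → ℝ) :
    ∑ i, ∑ k, ∑ j, ψ i k j * (y i k + u i + v j) =
      ∑ i, ∑ k, ∑ j, ψ i k j * y i k + ∑ i, ψp i * u i + ∑ j, ψw j * v j := by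
  simp only [mul_add, sum_add_distrib]
  rw [sum3_mul_fst hψp, sum3_mul_thd hψw]

theorem sum3_mul_add_add_sq {ψp : ι → ℝ} {ψw : τ → ℝ} (hψp : ∀ i, ψp i = ∑ k, ∑ j, ψ i k j)
    (hψw : ∀ j, ψw j = ∑ i, ∑ k, ψ i k j) (hind : ∀ i j, ∑ k, ψ i k j = ψp i * ψw j)
    {y : ι → κ → ℝ} {vp : ι → ℝ} {vw : τ → ℝ} (hvp : ∀ i, vp i = ∑ k, ∑ j, ψ i k j * y i k)
    (hvw : ∀ j, vw j = ∑ i, ∑ k, ψ i k j * y i k) (u : ι → ℝ) (v : τ → ℝ) :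
    ∑ i, ∑ k, ∑ j, ψ i k j * (y i k + u i + v j) ^ 2 =
      ∑ i, ∑ k, ∑ j, ψ i k j * y i k ^ 2 + ∑ i, ψp i * u i ^ 2 + ∑ j, ψw j * v j ^ 2 +
        2 * ∑ i, vp i * u i + 2 * ∑ j, vw j * v j +
        2 * ((∑ i, ψp i * u i) * ∑ j, ψw j * v j) := by
  have expand : ∀ i k j, ψ i k j * (y i k + u i + v j) ^ 2 =
      ψ i k j * y i k ^ 2 + ψ i k j * u i ^ 2 + ψ i k j * v j ^ 2 +
        2 * (ψ i k j * y i k * u i) + 2 * (ψ i k j * y i k * v j) +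
        2 * (ψ i k j * (u i * v j)) := fun i k j => by ring
  simp only [expand, sum_add_distrib, ← mul_sum]
  rw [sum3_mul_fst hψp, sum3_mul_thd hψw, sum3_mul_fst hvp, sum3_mul_thd hvw,
    sum3_mul_fst_mul_thd hind]

theorem sum3_mul_sub_sum3_mul_sq (hψ : ∑ i, ∑ k, ∑ j, ψ i k j = 1)
    (X : ι → κ → τ → ℝ) :
    ∑ i, ∑ k, ∑ j, ψ i k j * (X i k j - ∑ i', ∑ k', ∑ j', ψ i' k' j' * X i' k' j') ^ 2 =
      ∑ i, ∑ k, ∑ j, ψ i k j * X i k j ^ 2 - (∑ i, ∑ k, ∑ j, ψ i k j * X i k j) ^ 2 := by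
  simp only [← Fintype.sum_prod_type'] at hψ ⊢
  exact sum_mul_sub_sum_mul_sq hψ fun ω => X ω.1 ω.2.1 ω.2.2

end TripleSums

theorem separable_maximizer_iff {α β γ : Type*} [AddCommMonoid γ] [PartialOrder γ]
    [IsOrderedCancelAddMonoid γ] {P : α → Prop} {Q : β → Prop} {F : α → β → γ} {f : α → γ}
    {g : β → γ} (c : γ) (hF : ∀ x y, F x y = c + f x + g y) {x : α} {y : β} :
    (P x ∧ Q y ∧ ∀ x' y', P x' → Q y' → F x' y' ≤ F x y) ↔
      ((P x ∧ ∀ x', P x' → f x' ≤ f x) ∧ (Q y ∧ ∀ y', Q y' → g y' ≤ g y)) := by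
  constructor
  · rintro ⟨hx, hy, hmax⟩
    exact ⟨⟨hx, fun x' hx' => by simpa [hF] using hmax x' y hx' hy⟩,
      ⟨hy, fun y' hy' => by simpa [hF] using hmax x y' hx hy'⟩⟩
  · rintro ⟨⟨hx, hf⟩, hy, hg⟩
    refine ⟨hx, hy, fun x' y' hx' hy' => ?_⟩
    rw [hF, hF]
    exact add_le_add (add_le_add le_rfl (hf x' hx')) (hg y' hy')

theorem stmt_17_general (n m l : ℕ)
    (ψ : Fin n → Fin l → Fin m → ℝ)
    (hψ1 : ∑ i, ∑ k, ∑ j, ψ i k j = 1)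
    (ψp : Fin n → ℝ) (hψp : ∀ i, ψp i = ∑ k, ∑ j, ψ i k j)
    (ψw : Fin m → ℝ) (hψw : ∀ j, ψw j = ∑ i, ∑ k, ψ i k j)
    (ψpw : Matrix (Fin n) (Fin m) ℝ) (hψpw : ∀ i j, ψpw i j = ∑ k, ψ i k j)
    (y : Fin n → Fin l → ℝ)
    (μy : ℝ) (hμy : μy = ∑ i, ∑ k, ∑ j, ψ i k j * y i k)
    (vp : Fin n → ℝ) (hvp : ∀ i, vp i = ∑ k, ∑ j, ψ i k j * y i k)
    (vw : Fin m → ℝ) (hvw : ∀ j, vw j = ∑ i, ∑ k, ψ i k j * y i k)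
    (cp : Fin n → ℝ) (hcp : ∀ i, cp i = μy * ψp i - vp i)
    (cw : Fin m → ℝ) (hcw : ∀ j, cw j = μy * ψw j - vw j)
    (Mpp : Matrix (Fin n) (Fin n) ℝ)
    (hMpp : ∀ i i', Mpp i i' = (if i = i' then ψp i else 0) - ψp i * ψp i')
    (Mww : Matrix (Fin m) (Fin m) ℝ)
    (hMww : ∀ j j', Mww j j' = (if j = j' then ψw j else 0) - ψw j * ψw j')
    (φp : Fin n → ℝ)
    (φw : Fin m → ℝ)
    (F : ℝ → (Fin n → ℝ) → (Fin m → ℝ) → ℝ)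
    (hF : ∀ (a : ℝ) (xP : Fin n → ℝ) (xW : Fin m → ℝ), F a xP xW =
      (∑ i, ∑ k, ∑ j, ψ i k j * (y i k + xP i + xW j)) -
      a * (∑ i, ∑ k, ∑ j, ψ i k j *
        (y i k + xP i + xW j - ∑ i', ∑ k', ∑ j', ψ i' k' j' * (y i' k' + xP i' + xW j'))^2))
    (Gp : ℝ → (Fin n → ℝ) → ℝ)
    (hGp : ∀ (a : ℝ) (x : Fin n → ℝ), Gp a x =
      (∑ i, (ψp i + 2*a*cp i) * x i) - a * (x ⬝ᵥ Mpp.mulVec x))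
    (Gw : ℝ → (Fin m → ℝ) → ℝ)
    (hGw : ∀ (a : ℝ) (x : Fin m → ℝ), Gw a x =
      (∑ j, (ψw j + 2*a*cw j) * x j) - a * (x ⬝ᵥ Mww.mulVec x))
    (hind : ∀ i j, ψpw i j = ψp i * ψw j) :
    ∀ a : ℝ, 0 < a → ∀ (xP : Fin n → ℝ) (xW : Fin m → ℝ),
      ((∑ i, φp i * xP i) = 0 ∧ (∑ j, φw j * xW j) = 0 ∧
        ∀ (xP' : Fin n → ℝ) (xW' : Fin m → ℝ),
          (∑ i, φp i * xP' i) = 0 → (∑ j, φw j * xW' j) = 0 → F a xP' xW' ≤ F a xP xW)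
      ↔ (((∑ i, φp i * xP i) = 0 ∧
            ∀ x : Fin n → ℝ, (∑ i, φp i * x i) = 0 → Gp a x ≤ Gp a xP) ∧
          ((∑ j, φw j * xW j) = 0 ∧
            ∀ x : Fin m → ℝ, (∑ j, φw j * x j) = 0 → Gw a x ≤ Gw a xW)) := by
  intro a _ xP xW
  have hMpp' : Mpp = diagonal ψp - vecMulVec ψp ψp := by
    ext i i'; simp [hMpp, diagonal_apply, vecMulVec_apply]
  have hMww' : Mww = diagonal ψw - vecMulVec ψw ψw := by
    ext j j'; simp [hMww, diagonal_apply, vecMulVec_apply]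
  have hψind : ∀ i j, ∑ k, ψ i k j = ψp i * ψw j := fun i j => (hψpw i j).symm.trans (hind i j)
  refine separable_maximizer_iff (P := fun x => ∑ i, φp i * x i = 0)
    (Q := fun x => ∑ j, φw j * x j = 0) (f := Gp a) (g := Gw a)
    (μy - a * (∑ i, ∑ k, ∑ j, ψ i k j * y i k ^ 2 - μy ^ 2)) fun u v => ?_
  rw [hF, sum3_mul_sub_sum3_mul_sq hψ1, sum3_mul_add_add hψp hψw,
    sum3_mul_add_add_sq hψp hψw hψind hvp hvw, hGp, hGw, funext hcp, funext hcw,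
    sum_add_mul_sub_mul, sum_add_mul_sub_mul, hMpp', hMww',
    dotProduct_diagonal_sub_vecMulVec_mulVec, dotProduct_diagonal_sub_vecMulVec_mulVec, ← hμy]
  ring

theorem stmt_17 (n m l : ℕ) (hn : 1 ≤ n) (hm : 1 ≤ m) (hl : 1 ≤ l)
    (p : Fin n → ℝ) (q : Fin l → ℝ) (w : Fin m → ℝ)
    (ψ : Fin n → Fin l → Fin m → ℝ)
    (hψ0 : ∀ i k j, 0 ≤ ψ i k j)
    (hψ1 : ∑ i, ∑ k, ∑ j, ψ i k j = 1)
    (ψp : Fin n → ℝ) (hψp : ∀ i, ψp i = ∑ k, ∑ j, ψ i k j)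
    (ψw : Fin m → ℝ) (hψw : ∀ j, ψw j = ∑ i, ∑ k, ψ i k j)
    (ψpw : Matrix (Fin n) (Fin m) ℝ) (hψpw : ∀ i j, ψpw i j = ∑ k, ψ i k j)
    (r : ℝ) (y : Fin n → Fin l → ℝ) (hy : ∀ i k, y i k = (r - p i) * q k)
    (μy : ℝ) (hμy : μy = ∑ i, ∑ k, ∑ j, ψ i k j * y i k)
    (vp : Fin n → ℝ) (hvp : ∀ i, vp i = ∑ k, ∑ j, ψ i k j * y i k)
    (vw : Fin m → ℝ) (hvw : ∀ j, vw j = ∑ i, ∑ k, ψ i k j * y i k)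
    (cp : Fin n → ℝ) (hcp : ∀ i, cp i = μy * ψp i - vp i)
    (cw : Fin m → ℝ) (hcw : ∀ j, cw j = μy * ψw j - vw j)
    (Mpp : Matrix (Fin n) (Fin n) ℝ)
    (hMpp : ∀ i i', Mpp i i' = (if i = i' then ψp i else 0) - ψp i * ψp i')
    (Mww : Matrix (Fin m) (Fin m) ℝ)
    (hMww : ∀ j j', Mww j j' = (if j = j' then ψw j else 0) - ψw j * ψw j')
    (φ : Fin n → Fin m → ℝ)
    (hφ0 : ∀ i j, 0 ≤ φ i j) (hφ1 : ∑ i, ∑ j, φ i j = 1)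
    (φp : Fin n → ℝ) (hφp : ∀ i, φp i = ∑ j, φ i j)
    (φw : Fin m → ℝ) (hφw : ∀ j, φw j = ∑ i, φ i j)
    (F : ℝ → (Fin n → ℝ) → (Fin m → ℝ) → ℝ)
    (hF : ∀ (a : ℝ) (xP : Fin n → ℝ) (xW : Fin m → ℝ), F a xP xW =
      (∑ i, ∑ k, ∑ j, ψ i k j * (y i k + xP i + xW j)) -
      a * (∑ i, ∑ k, ∑ j, ψ i k j *
        (y i k + xP i + xW j - ∑ i', ∑ k', ∑ j', ψ i' k' j' * (y i' k' + xP i' + xW j'))^2))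
    (Gp : ℝ → (Fin n → ℝ) → ℝ)
    (hGp : ∀ (a : ℝ) (x : Fin n → ℝ), Gp a x =
      (∑ i, (ψp i + 2*a*cp i) * x i) - a * (x ⬝ᵥ Mpp.mulVec x))
    (Gw : ℝ → (Fin m → ℝ) → ℝ)
    (hGw : ∀ (a : ℝ) (x : Fin m → ℝ), Gw a x =
      (∑ j, (ψw j + 2*a*cw j) * x j) - a * (x ⬝ᵥ Mww.mulVec x))
    (hind : ∀ i j, ψpw i j = ψp i * ψw j) :
    ∀ a : ℝ, 0 < a → ∀ (xP : Fin n → ℝ) (xW : Fin m → ℝ),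
      ((∑ i, φp i * xP i) = 0 ∧ (∑ j, φw j * xW j) = 0 ∧
        ∀ (xP' : Fin n → ℝ) (xW' : Fin m → ℝ),
          (∑ i, φp i * xP' i) = 0 → (∑ j, φw j * xW' j) = 0 → F a xP' xW' ≤ F a xP xW)
      ↔ (((∑ i, φp i * xP i) = 0 ∧
            ∀ x : Fin n → ℝ, (∑ i, φp i * x i) = 0 → Gp a x ≤ Gp a xP) ∧
          ((∑ j, φw j * xW j) = 0 ∧
            ∀ x : Fin m → ℝ, (∑ j, φw j * x j) = 0 → Gw a x ≤ Gw a xW)) :=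
  stmt_17_general n m l ψ hψ1 ψp hψp ψw hψw ψpw hψpw y μy hμy vp hvp vw hvw cp hcp cw hcw Mpp hMpp
    Mww hMww φp φw F hF Gp hGp Gw hGw hind
end

section
/- Assume ψ_p(i) > 0 for all i, ψ_w(j) > 0 for all j, that φ_p = ψ_p and φ_w = ψ_w, and that price and weather index are ψ-independent, i.e. ψ_{pw} = ψ_p ψ_w^T. Define the conditional means μ_y^p(i) = v_p(i)/ψ_p(i) and μ_y^w(j) = v_w(j)/ψ_w(j). Then for every a > 0 the contingent claims x_P(i) = μ_y − μ_y^p(i) and x_W(j) = μ_y − μ_y^w(j), together with multipliers λ_p = λ_w = 1, satisfy the first-order conditions 2a M x + B(λ_p,λ_w)^T = 2a c + d and B^T x = 0; in particular (x_P, x_W) is an optimal solution of the hedging problem. -/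
/-!
Under independence of price and weather, the residual `e = y + x_P(p) + x_W(w) - μ_y` of the
conditional-mean hedge has zero conditional ψ-expectation given `p` and given `w` (these are the
main effects of a two-way analysis of variance). Every other feasible hedge has the same mean `μ_y`
and differs from it by some `δ_P(p) + δ_W(w)`, which is therefore orthogonal to `e`; its variance is
`Var + E[(δ_P + δ_W)²] ≥ Var`. Independence also makes `M` block diagonal, and on each block `M x`
is the vector `c` of first-order conditions.
-/

open Finset Matrix

namespace Hedging

section TripleSums

variable {ι κ ν : Type*} [Fintype ι] [Fintype κ] [Fintype ν]
  {ψ : ι → κ → ν → ℝ} {ψp : ι → ℝ} {ψw : ν → ℝ}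

theorem sum_sum_sum_rotate (F : ι → κ → ν → ℝ) :
    ∑ i, ∑ k, ∑ j, F i k j = ∑ j, ∑ i, ∑ k, F i k j :=
  (sum_congr rfl fun _ _ => sum_comm).trans sum_comm

theorem sum_sum_sum_mul_left (hψp : ∀ i, ψp i = ∑ k, ∑ j, ψ i k j) (g : ι → ℝ) :
    ∑ i, ∑ k, ∑ j, ψ i k j * g i = ∑ i, ψp i * g i := by
  simp_rw [← sum_mul, hψp]

theorem sum_sum_sum_mul_right (hψw : ∀ j, ψw j = ∑ i, ∑ k, ψ i k j) (h : ν → ℝ) :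
    ∑ i, ∑ k, ∑ j, ψ i k j * h j = ∑ j, ψw j * h j := by
  rw [sum_sum_sum_rotate]
  simp_rw [← sum_mul, hψw]

theorem sum_sum_sum_mul_add_add (hψp : ∀ i, ψp i = ∑ k, ∑ j, ψ i k j)
    (hψw : ∀ j, ψw j = ∑ i, ∑ k, ψ i k j) {g : ι → ℝ} {h : ν → ℝ}
    (hg : ∑ i, ψp i * g i = 0) (hh : ∑ j, ψw j * h j = 0) (f : ι → κ → ν → ℝ) :
    ∑ i, ∑ k, ∑ j, ψ i k j * (f i k j + g i + h j) = ∑ i, ∑ k, ∑ j, ψ i k j * f i k j := by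
  simp only [mul_add, sum_add_distrib, sum_sum_sum_mul_left hψp, sum_sum_sum_mul_right hψw, hg, hh,
    add_zero]

/-- `hg` says `g i = c - E[f | i]`, with the division by `ψp i` cleared. -/
theorem sum_mul_eq_zero_of_conditional_mean_left (hψp : ∀ i, ψp i = ∑ k, ∑ j, ψ i k j)
    (hψ1 : ∑ i, ∑ k, ∑ j, ψ i k j = 1) {f : ι → κ → ν → ℝ} {c : ℝ}
    (hc : c = ∑ i, ∑ k, ∑ j, ψ i k j * f i k j) {g : ι → ℝ}
    (hg : ∀ i, ψp i * g i = ψp i * c - ∑ k, ∑ j, ψ i k j * f i k j) :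
    ∑ i, ψp i * g i = 0 := by
  have hψp1 : ∑ i, ψp i = 1 := by simp_rw [hψp]; exact hψ1
  rw [sum_congr rfl fun i _ => hg i, sum_sub_distrib, ← sum_mul, hψp1, ← hc, one_mul, sub_self]

theorem sum_mul_eq_zero_of_conditional_mean_right (hψw : ∀ j, ψw j = ∑ i, ∑ k, ψ i k j)
    (hψ1 : ∑ i, ∑ k, ∑ j, ψ i k j = 1) {f : ι → κ → ν → ℝ} {c : ℝ}
    (hc : c = ∑ i, ∑ k, ∑ j, ψ i k j * f i k j) {h : ν → ℝ}
    (hh : ∀ j, ψw j * h j = ψw j * c - ∑ i, ∑ k, ψ i k j * f i k j) :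
    ∑ j, ψw j * h j = 0 := by
  have hψw1 : ∑ j, ψw j = 1 := by simp_rw [hψw]; rw [← sum_sum_sum_rotate]; exact hψ1
  rw [sum_congr rfl fun j _ => hh j, sum_sub_distrib, ← sum_mul, hψw1, hc, sum_sum_sum_rotate,
    one_mul, sub_self]

theorem sum_sum_sum_mul_sq_le_of_orthogonal (hψ0 : ∀ i k j, 0 ≤ ψ i k j)
    {e : ι → κ → ν → ℝ} (horth_left : ∀ i, ∑ k, ∑ j, ψ i k j * e i k j = 0)
    (horth_right : ∀ j, ∑ i, ∑ k, ψ i k j * e i k j = 0) (g : ι → ℝ) (h : ν → ℝ) :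
    ∑ i, ∑ k, ∑ j, ψ i k j * e i k j ^ 2 ≤ ∑ i, ∑ k, ∑ j, ψ i k j * (e i k j + g i + h j) ^ 2 := by
  have hcross_left : ∑ i, ∑ k, ∑ j, ψ i k j * e i k j * g i = 0 := by
    simp_rw [← sum_mul, horth_left, zero_mul, sum_const_zero]
  have hcross_right : ∑ i, ∑ k, ∑ j, ψ i k j * e i k j * h j = 0 := by
    rw [sum_sum_sum_rotate]
    simp_rw [← sum_mul, horth_right, zero_mul, sum_const_zero]
  have hsq : 0 ≤ ∑ i, ∑ k, ∑ j, ψ i k j * (g i + h j) ^ 2 :=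
    sum_nonneg fun i _ => sum_nonneg fun k _ => sum_nonneg fun j _ =>
      mul_nonneg (hψ0 i k j) (sq_nonneg _)
  have hexpand : ∑ i, ∑ k, ∑ j, ψ i k j * (e i k j + g i + h j) ^ 2 =
      ∑ i, ∑ k, ∑ j, ψ i k j * e i k j ^ 2
        + 2 * ∑ i, ∑ k, ∑ j, ψ i k j * e i k j * g i
        + 2 * ∑ i, ∑ k, ∑ j, ψ i k j * e i k j * h j
        + ∑ i, ∑ k, ∑ j, ψ i k j * (g i + h j) ^ 2 := by
    simp only [mul_sum, ← sum_add_distrib]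
    exact sum_congr rfl fun i _ => sum_congr rfl fun k _ => sum_congr rfl fun j _ => by ring
  rw [hexpand, hcross_left, hcross_right]
  linarith

theorem sum_sum_sum_mul_sub_sq_le_of_orthogonal (hψ0 : ∀ i k j, 0 ≤ ψ i k j)
    {f : ι → κ → ν → ℝ} {c : ℝ} {g : ι → ℝ} {h : ν → ℝ}
    (horth_left : ∀ i, ∑ k, ∑ j, ψ i k j * (f i k j + g i + h j - c) = 0)
    (horth_right : ∀ j, ∑ i, ∑ k, ψ i k j * (f i k j + g i + h j - c) = 0)
    (g' : ι → ℝ) (h' : ν → ℝ) :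
    ∑ i, ∑ k, ∑ j, ψ i k j * (f i k j + g i + h j - c) ^ 2 ≤
      ∑ i, ∑ k, ∑ j, ψ i k j * (f i k j + g' i + h' j - c) ^ 2 := by
  convert sum_sum_sum_mul_sq_le_of_orthogonal hψ0 horth_left horth_right (g' - g) (h' - h)
    using 6
  simp only [Pi.sub_apply]
  ring

end TripleSums

section Residual

variable {ι κ ν : Type*} [Fintype κ] {ψ : ι → κ → ν → ℝ} {ψp : ι → ℝ} {ψw : ν → ℝ}

theorem sum_sum_residual_left [Fintype ν] (hψp : ∀ i, ψp i = ∑ k, ∑ j, ψ i k j)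
    (hind : ∀ i j, ∑ k, ψ i k j = ψp i * ψw j) {f : ι → κ → ν → ℝ} {c : ℝ} {g : ι → ℝ}
    {h : ν → ℝ} (hg : ∀ i, ψp i * g i = ψp i * c - ∑ k, ∑ j, ψ i k j * f i k j)
    (hh : ∑ j, ψw j * h j = 0) (i : ι) :
    ∑ k, ∑ j, ψ i k j * (f i k j + g i + h j - c) = 0 := by
  have hcross : ∑ k, ∑ j, ψ i k j * h j = 0 := by
    rw [sum_comm]
    simp_rw [← sum_mul, hind, mul_assoc, ← mul_sum, hh, mul_zero]
  simp only [mul_sub, mul_add, sum_add_distrib, sum_sub_distrib, ← sum_mul, ← hψp, hcross, hg]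
  ring

theorem sum_sum_residual_right [Fintype ι] (hψw : ∀ j, ψw j = ∑ i, ∑ k, ψ i k j)
    (hind : ∀ i j, ∑ k, ψ i k j = ψp i * ψw j) {f : ι → κ → ν → ℝ} {c : ℝ} {g : ι → ℝ}
    {h : ν → ℝ} (hg : ∑ i, ψp i * g i = 0)
    (hh : ∀ j, ψw j * h j = ψw j * c - ∑ i, ∑ k, ψ i k j * f i k j) (j : ν) :
    ∑ i, ∑ k, ψ i k j * (f i k j + g i + h j - c) = 0 := by
  have := sum_sum_residual_left (ψ := fun j k i => ψ i k j) (ψp := ψw) (ψw := ψp)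
    (f := fun j k i => f i k j) (fun j => by rw [hψw, sum_comm]) (fun j i => by rw [hind, mul_comm])
    (fun j => by rw [hh, sum_comm]) hg j
  rw [sum_comm]
  simpa only [add_right_comm] using this

end Residual

section Blocks

variable {ι ν : Type*}

theorem sum_ite_sub_mul_mul [Fintype ι] [DecidableEq ι] (s x : ι → ℝ) (i : ι) :
    ∑ i', ((if i = i' then s i else 0) - s i * s i') * x i' =
      s i * x i - s i * ∑ i', s i' * x i' := by
  simp_rw [sub_mul, sum_sub_distrib, ite_mul, zero_mul, sum_ite_eq, if_pos (mem_univ i), mul_assoc,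
    mul_sum]

theorem mulVec_sum_elim_of_centered [Fintype ι] [Fintype ν] [DecidableEq ι] [DecidableEq ν]
    {M : Matrix (ι ⊕ ν) (ι ⊕ ν) ℝ} {ψp : ι → ℝ} {ψw : ν → ℝ}
    (hMpp : ∀ i i', M (Sum.inl i) (Sum.inl i') = (if i = i' then ψp i else 0) - ψp i * ψp i')
    (hMww : ∀ j j', M (Sum.inr j) (Sum.inr j') = (if j = j' then ψw j else 0) - ψw j * ψw j')
    (hMpw : ∀ i j, M (Sum.inl i) (Sum.inr j) = 0) (hMwp : ∀ i j, M (Sum.inr j) (Sum.inl i) = 0)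
    {x : ι → ℝ} {z : ν → ℝ} (hx : ∑ i, ψp i * x i = 0) (hz : ∑ j, ψw j * z j = 0) :
    M *ᵥ Sum.elim x z = Sum.elim (fun i => ψp i * x i) (fun j => ψw j * z j) := by
  ext (i | j) <;>
    simp [mulVec, dotProduct, Fintype.sum_sum_type, hMpp, hMww, hMpw, hMwp, sum_ite_sub_mul_mul,
      hx, hz]

variable {B : Matrix (ι ⊕ ν) (Fin 2) ℝ} {φp : ι → ℝ} {φw : ν → ℝ}

theorem mulVec_cons_one_one (hBp0 : ∀ i, B (Sum.inl i) 0 = φp i) (hBp1 : ∀ i, B (Sum.inl i) 1 = 0)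
    (hBw0 : ∀ j, B (Sum.inr j) 0 = 0) (hBw1 : ∀ j, B (Sum.inr j) 1 = φw j) :
    B *ᵥ ![1, 1] = Sum.elim φp φw := by
  ext (i | j) <;> simp [mulVec, dotProduct, Fin.sum_univ_two, hBp0, hBp1, hBw0, hBw1]

theorem transpose_mulVec_sum_elim [Fintype ι] [Fintype ν] (hBp0 : ∀ i, B (Sum.inl i) 0 = φp i)
    (hBp1 : ∀ i, B (Sum.inl i) 1 = 0) (hBw0 : ∀ j, B (Sum.inr j) 0 = 0)
    (hBw1 : ∀ j, B (Sum.inr j) 1 = φw j) (x : ι → ℝ) (z : ν → ℝ) :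
    Bᵀ *ᵥ Sum.elim x z = ![∑ i, φp i * x i, ∑ j, φw j * z j] := by
  ext c
  fin_cases c <;> simp [mulVec, dotProduct, Fintype.sum_sum_type, hBp0, hBp1, hBw0, hBw1]

end Blocks

end Hedging

open Hedging

theorem stmt_18_general (n m l : ℕ)
    (ψ : Fin n → Fin l → Fin m → ℝ)
    (hψ0 : ∀ i k j, 0 ≤ ψ i k j)
    (hψ1 : ∑ i, ∑ k, ∑ j, ψ i k j = 1)
    (ψp : Fin n → ℝ) (hψp : ∀ i, ψp i = ∑ k, ∑ j, ψ i k j)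
    (ψw : Fin m → ℝ) (hψw : ∀ j, ψw j = ∑ i, ∑ k, ψ i k j)
    (ψpw : Matrix (Fin n) (Fin m) ℝ) (hψpw : ∀ i j, ψpw i j = ∑ k, ψ i k j)
    (y : Fin n → Fin l → ℝ)
    (μy : ℝ) (hμy : μy = ∑ i, ∑ k, ∑ j, ψ i k j * y i k)
    (vp : Fin n → ℝ) (hvp : ∀ i, vp i = ∑ k, ∑ j, ψ i k j * y i k)
    (vw : Fin m → ℝ) (hvw : ∀ j, vw j = ∑ i, ∑ k, ψ i k j * y i k)
    (cp : Fin n → ℝ) (hcp : ∀ i, cp i = μy * ψp i - vp i)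
    (cw : Fin m → ℝ) (hcw : ∀ j, cw j = μy * ψw j - vw j)
    (M : Matrix (Fin n ⊕ Fin m) (Fin n ⊕ Fin m) ℝ)
    (hMpp : ∀ i i', M (Sum.inl i) (Sum.inl i') = (if i = i' then ψp i else 0) - ψp i * ψp i')
    (hMww : ∀ j j', M (Sum.inr j) (Sum.inr j') = (if j = j' then ψw j else 0) - ψw j * ψw j')
    (hMpw : ∀ i j, M (Sum.inl i) (Sum.inr j) = ψpw i j - ψp i * ψw j)
    (hMwp : ∀ i j, M (Sum.inr j) (Sum.inl i) = ψpw i j - ψp i * ψw j)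
    (φp : Fin n → ℝ)
    (φw : Fin m → ℝ)
    (B : Matrix (Fin n ⊕ Fin m) (Fin 2) ℝ)
    (hBp0 : ∀ i, B (Sum.inl i) 0 = φp i) (hBp1 : ∀ i, B (Sum.inl i) 1 = 0)
    (hBw0 : ∀ j, B (Sum.inr j) 0 = 0) (hBw1 : ∀ j, B (Sum.inr j) 1 = φw j)
    (F : ℝ → (Fin n → ℝ) → (Fin m → ℝ) → ℝ)
    (hF : ∀ (a : ℝ) (xP : Fin n → ℝ) (xW : Fin m → ℝ), F a xP xW =
      (∑ i, ∑ k, ∑ j, ψ i k j * (y i k + xP i + xW j)) -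
      a * (∑ i, ∑ k, ∑ j, ψ i k j *
        (y i k + xP i + xW j - ∑ i', ∑ k', ∑ j', ψ i' k' j' * (y i' k' + xP i' + xW j'))^2))
    (hψppos : ∀ i, 0 < ψp i) (hψwpos : ∀ j, 0 < ψw j)
    (hφpψ : φp = ψp) (hφwψ : φw = ψw)
    (hind : ∀ i j, ψpw i j = ψp i * ψw j)
    (xP : Fin n → ℝ) (hxP : ∀ i, xP i = μy - vp i / ψp i)
    (xW : Fin m → ℝ) (hxW : ∀ j, xW j = μy - vw j / ψw j) :
    ∀ a : ℝ, 0 < a →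
      ((2*a) • M.mulVec (Sum.elim xP xW) + B.mulVec ![1, 1]
          = (2*a) • Sum.elim cp cw + Sum.elim ψp ψw) ∧
      B.transpose.mulVec (Sum.elim xP xW) = 0 ∧
      ((∑ i, φp i * xP i) = 0 ∧ (∑ j, φw j * xW j) = 0 ∧
        ∀ (xP' : Fin n → ℝ) (xW' : Fin m → ℝ),
          (∑ i, φp i * xP' i) = 0 → (∑ j, φw j * xW' j) = 0 → F a xP' xW' ≤ F a xP xW) := by
  intro a ha
  subst φp φw
  have hxP_mul (i) : ψp i * xP i = ψp i * μy - vp i := by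
    rw [hxP]; field_simp [(hψppos i).ne']
  have hxW_mul (j) : ψw j * xW j = ψw j * μy - vw j := by
    rw [hxW]; field_simp [(hψwpos j).ne']
  have hcondP (i) : ψp i * xP i = ψp i * μy - ∑ k, ∑ j, ψ i k j * y i k := hvp i ▸ hxP_mul i
  have hcondW (j) : ψw j * xW j = ψw j * μy - ∑ i, ∑ k, ψ i k j * y i k := hvw j ▸ hxW_mul j
  have hcenP := sum_mul_eq_zero_of_conditional_mean_left hψp hψ1 hμy hcondP
  have hcenW := sum_mul_eq_zero_of_conditional_mean_right hψw hψ1 hμy hcondW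
  have hindψ (i j) : ∑ k, ψ i k j = ψp i * ψw j := (hψpw i j).symm.trans (hind i j)
  have hMx : M *ᵥ Sum.elim xP xW = Sum.elim cp cw := by
    rw [mulVec_sum_elim_of_centered hMpp hMww (fun i j => by rw [hMpw, hind, sub_self])
      (fun i j => by rw [hMwp, hind, sub_self]) hcenP hcenW]
    congr 1 <;> funext <;> simp only [hxP_mul, hcp, hxW_mul, hcw, mul_comm]
  refine ⟨by rw [hMx, mulVec_cons_one_one hBp0 hBp1 hBw0 hBw1],
    by simp [transpose_mulVec_sum_elim hBp0 hBp1 hBw0 hBw1, hcenP, hcenW], hcenP, hcenW, ?_⟩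
  intro xP' xW' hP' hW'
  have hmean {g : Fin n → ℝ} {h : Fin m → ℝ} (hg : ∑ i, ψp i * g i = 0)
      (hh : ∑ j, ψw j * h j = 0) : ∑ i, ∑ k, ∑ j, ψ i k j * (y i k + g i + h j) = μy :=
    (sum_sum_sum_mul_add_add hψp hψw hg hh fun i k _ => y i k).trans hμy.symm
  rw [hF, hF, hmean hP' hW', hmean hcenP hcenW]
  gcongr μy - a * ?_
  exact sum_sum_sum_mul_sub_sq_le_of_orthogonal hψ0 (sum_sum_residual_left hψp hindψ hcondP hcenW)
    (sum_sum_residual_right hψw hindψ hcenP hcondW) xP' xW'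

theorem stmt_18 (n m l : ℕ) (hn : 1 ≤ n) (hm : 1 ≤ m) (hl : 1 ≤ l)
    (p : Fin n → ℝ) (q : Fin l → ℝ) (w : Fin m → ℝ)
    (ψ : Fin n → Fin l → Fin m → ℝ)
    (hψ0 : ∀ i k j, 0 ≤ ψ i k j)
    (hψ1 : ∑ i, ∑ k, ∑ j, ψ i k j = 1)
    (ψp : Fin n → ℝ) (hψp : ∀ i, ψp i = ∑ k, ∑ j, ψ i k j)
    (ψw : Fin m → ℝ) (hψw : ∀ j, ψw j = ∑ i, ∑ k, ψ i k j)
    (ψpw : Matrix (Fin n) (Fin m) ℝ) (hψpw : ∀ i j, ψpw i j = ∑ k, ψ i k j)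
    (r : ℝ) (y : Fin n → Fin l → ℝ) (hy : ∀ i k, y i k = (r - p i) * q k)
    (μy : ℝ) (hμy : μy = ∑ i, ∑ k, ∑ j, ψ i k j * y i k)
    (vp : Fin n → ℝ) (hvp : ∀ i, vp i = ∑ k, ∑ j, ψ i k j * y i k)
    (vw : Fin m → ℝ) (hvw : ∀ j, vw j = ∑ i, ∑ k, ψ i k j * y i k)
    (cp : Fin n → ℝ) (hcp : ∀ i, cp i = μy * ψp i - vp i)
    (cw : Fin m → ℝ) (hcw : ∀ j, cw j = μy * ψw j - vw j)
    (M : Matrix (Fin n ⊕ Fin m) (Fin n ⊕ Fin m) ℝ)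
    (hMpp : ∀ i i', M (Sum.inl i) (Sum.inl i') = (if i = i' then ψp i else 0) - ψp i * ψp i')
    (hMww : ∀ j j', M (Sum.inr j) (Sum.inr j') = (if j = j' then ψw j else 0) - ψw j * ψw j')
    (hMpw : ∀ i j, M (Sum.inl i) (Sum.inr j) = ψpw i j - ψp i * ψw j)
    (hMwp : ∀ i j, M (Sum.inr j) (Sum.inl i) = ψpw i j - ψp i * ψw j)
    (φ : Fin n → Fin m → ℝ)
    (hφ0 : ∀ i j, 0 ≤ φ i j) (hφ1 : ∑ i, ∑ j, φ i j = 1)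
    (φp : Fin n → ℝ) (hφp : ∀ i, φp i = ∑ j, φ i j)
    (φw : Fin m → ℝ) (hφw : ∀ j, φw j = ∑ i, φ i j)
    (B : Matrix (Fin n ⊕ Fin m) (Fin 2) ℝ)
    (hBp0 : ∀ i, B (Sum.inl i) 0 = φp i) (hBp1 : ∀ i, B (Sum.inl i) 1 = 0)
    (hBw0 : ∀ j, B (Sum.inr j) 0 = 0) (hBw1 : ∀ j, B (Sum.inr j) 1 = φw j)
    (F : ℝ → (Fin n → ℝ) → (Fin m → ℝ) → ℝ)
    (hF : ∀ (a : ℝ) (xP : Fin n → ℝ) (xW : Fin m → ℝ), F a xP xW =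
      (∑ i, ∑ k, ∑ j, ψ i k j * (y i k + xP i + xW j)) -
      a * (∑ i, ∑ k, ∑ j, ψ i k j *
        (y i k + xP i + xW j - ∑ i', ∑ k', ∑ j', ψ i' k' j' * (y i' k' + xP i' + xW j'))^2))
    (hψppos : ∀ i, 0 < ψp i) (hψwpos : ∀ j, 0 < ψw j)
    (hφpψ : φp = ψp) (hφwψ : φw = ψw)
    (hind : ∀ i j, ψpw i j = ψp i * ψw j)
    (xP : Fin n → ℝ) (hxP : ∀ i, xP i = μy - vp i / ψp i)
    (xW : Fin m → ℝ) (hxW : ∀ j, xW j = μy - vw j / ψw j) :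
    ∀ a : ℝ, 0 < a →
      ((2*a) • M.mulVec (Sum.elim xP xW) + B.mulVec ![1, 1]
          = (2*a) • Sum.elim cp cw + Sum.elim ψp ψw) ∧
      B.transpose.mulVec (Sum.elim xP xW) = 0 ∧
      ((∑ i, φp i * xP i) = 0 ∧ (∑ j, φw j * xW j) = 0 ∧
        ∀ (xP' : Fin n → ℝ) (xW' : Fin m → ℝ),
          (∑ i, φp i * xP' i) = 0 → (∑ j, φw j * xW' j) = 0 → F a xP' xW' ≤ F a xP xW) :=
  stmt_18_general n m l ψ hψ0 hψ1 ψp hψp ψw hψw ψpw hψpw y μy hμy vp hvp vw hvw cp hcp cw hcw M hMpp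
    hMww hMpw hMwp φp φw B hBp0 hBp1 hBw0 hBw1 F hF hψppos hψwpos hφpψ hφwψ hind xP hxP xW hxW
end
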